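/- Let m ≥ 2 and let V be a subspace of ℂ² ⊗ ℂᵐ of dimension m − 1 that contains no nonzero product vector a ⊗ b. Then there exists an invertible linear map 𝒜 : ℂᵐ → ℂᵐ such that the orthogonal complement V^⊥ equals the linear span of the vectors (1,α) ⊗ 𝒜(1,α,α²,…,α^{m−1}) as α ranges over ℂ. -/

import Mathlib

/-!
Pick a basis `ψ₁, …, ψₙ` of `V` (`n = m - 1`) and let `x`, `y` be the `n × m` matrices of the
conjugated slices `ψᵢ(0, ·)`, `ψᵢ(1, ·)`. Then `(1, α) ⊗ v ⊥ V` exactly when `(x + α y) v = 0`,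
so the signed maximal minors `N(X)` of the pencil `x + X y`, polynomials of degree `≤ n`, give a
curve `(1, α) ⊗ N(α)` inside `Vᗮ`.

Since `V` has no product vectors, the rows of `x + β y` (for every `β`) and of `y` are linearly
independent. A relation `∑ dₖ Nₖ = 0` would make the square polynomial matrix with rows `d`,
`x + X y` singular; descending along the roots of the first entry of a left kernel vector (`ℂ` is
algebraically closed) reduces to a constant first entry, which the top-degree coefficients then
rule out. Hence the `Nₖ` are linearly independent, i.e. `N(α) = 𝒜 (αʲ)ⱼ` for an invertible `𝒜`.
Finally `(1, α) ⊗ (αʲ)ⱼ` spans an `(m + 1)`-dimensional space, one dimension per power of `α`;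
applying `1 ⊗ 𝒜` keeps this dimension, which is that of `Vᗮ`.
-/

open Polynomial
open scoped Matrix

noncomputable section

theorem LinearIndependent.star {R M ι : Type*} [CommSemiring R] [StarRing R] [AddCommMonoid M]
    [Module R M] [StarAddMonoid M] [StarModule R M] {v : ι → M}
    (hv : LinearIndependent R v) : LinearIndependent R (star v) :=
  hv.map_of_injective_injectiveₛ (Star.star : R → R) (starAddEquiv (R := M)).toAddMonoidHom
    star_injective (starAddEquiv (R := M)).injective fun r m => by simp [star_smul]

theorem exists_linearEquiv_apply_pow_eq_eval {K : Type*} [Field K] {m : ℕ} {N : Fin m → K[X]}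
    (hN : LinearIndependent K N) (hdeg : ∀ k, (N k).natDegree < m) :
    ∃ A : (Fin m → K) ≃ₗ[K] (Fin m → K), ∀ α k, A (fun j => α ^ (j : ℕ)) k = (N k).eval α := by
  let N' : Fin m → degreeLT K m := fun k =>
    ⟨N k, mem_degreeLT.mpr (degree_le_natDegree.trans_lt (by exact_mod_cast hdeg k))⟩
  let coeffs : Matrix (Fin m) (Fin m) K := Matrix.of fun k j => (N k).coeff j
  have hrows : LinearIndependent K coeffs.row :=
    (LinearIndependent.of_comp (degreeLT K m).subtype (v := N') hN).map'
      (degreeLTEquiv K m).toLinearMap (degreeLTEquiv K m).ker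
  refine ⟨coeffs.toLinearEquiv' (Matrix.linearIndependent_rows_iff_isUnit.mp hrows).invertible,
    fun α k => ?_⟩
  rw [eval_eq_sum_range' (hdeg k), ← Fin.sum_univ_eq_sum_range]
  rfl

theorem span_range_sum_pow_smul {K E : Type*} [Field K] [Infinite K] [AddCommGroup E]
    [Module K E] {D : ℕ} (U : Fin D → E) :
    Submodule.span K (Set.range fun α : K => ∑ j : Fin D, α ^ (j : ℕ) • U j) =
      Submodule.span K (Set.range U) := by
  refine le_antisymm (Submodule.span_le.mpr ?_) (Submodule.span_le.mpr ?_)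
  · rintro _ ⟨α, rfl⟩
    exact Submodule.sum_mem _ fun j _ => Submodule.smul_mem _ _ (Submodule.subset_span ⟨j, rfl⟩)
  · rintro _ ⟨j, rfl⟩
    by_contra hj
    obtain ⟨f, hfj, hf⟩ := Submodule.exists_dual_map_eq_bot_of_notMem hj inferInstance
    -- `f` vanishes on the curve, so the polynomial `∑ f (U i) X ^ i` vanishes everywhere
    have hP : (∑ i : Fin D, C (f (U i)) * X ^ (i : ℕ)) = 0 := Polynomial.funext fun α => by
      have hα := Submodule.mem_map_of_mem (f := f) <|
        Submodule.subset_span (R := K) (Set.mem_range_self (f := fun α : K =>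
          ∑ j : Fin D, α ^ (j : ℕ) • U j) α)
      rw [hf, Submodule.mem_bot, map_sum] at hα
      simp only [eval_finsetSum, eval_mul, eval_C, eval_pow, eval_X, eval_zero, ← hα, map_smul,
        smul_eq_mul, mul_comm]
    apply hfj
    simpa [finsetSum_coeff, coeff_C_mul_X_pow, Fin.val_inj] using congrArg (coeff · j) hP

section Cofactor

variable {R : Type*} [CommRing R] {n : ℕ}

def cofactorVec (M : Matrix (Fin n) (Fin (n + 1)) R) (k : Fin (n + 1)) : R :=
  (-1) ^ (k : ℕ) * (M.submatrix id k.succAbove).det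

theorem det_of_cons_eq_dotProduct_cofactorVec (q : Fin (n + 1) → R)
    (M : Matrix (Fin n) (Fin (n + 1)) R) :
    (Matrix.of (Fin.cons q M)).det = q ⬝ᵥ cofactorVec M := by
  rw [Matrix.det_succ_row_zero]
  refine Finset.sum_congr rfl fun k _ => ?_
  rw [cofactorVec, show Matrix.of (Fin.cons q M) 0 k = q k from rfl,
    show (Matrix.of (Fin.cons q M)).submatrix Fin.succ k.succAbove =
      M.submatrix id k.succAbove from rfl]
  ring

theorem mulVec_cofactorVec (M : Matrix (Fin n) (Fin (n + 1)) R) : M *ᵥ cofactorVec M = 0 := by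
  funext i
  rw [Matrix.mulVec, ← det_of_cons_eq_dotProduct_cofactorVec]
  exact Matrix.det_zero_of_row_eq (Fin.succ_ne_zero i).symm rfl

end Cofactor

section Pencil

variable {K : Type*} [Field K] {ι κ : Type*}

def pencil (x y : Matrix ι κ K) : Matrix ι κ K[X] := (X : K[X]) • y.map C + x.map C

theorem pencil_apply (x y : Matrix ι κ K) (i : ι) (k : κ) :
    pencil x y i k = C (x i k) + X * C (y i k) :=
  add_comm _ _

theorem eval_pencil (x y : Matrix ι κ K) (β : K) (i : ι) (k : κ) :
    (pencil x y i k).eval β = x i k + β * y i k := by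
  rw [pencil_apply, eval_add, eval_mul, eval_X, eval_C, eval_C]

theorem natDegree_cofactorVec_pencil_le {n : ℕ} (x y : Matrix (Fin n) (Fin (n + 1)) K)
    (k : Fin (n + 1)) : (cofactorVec (pencil x y) k).natDegree ≤ n := by
  have hdet := natDegree_det_X_add_C_le (y.submatrix id k.succAbove) (x.submatrix id k.succAbove)
  rw [Fintype.card_fin] at hdet
  rw [cofactorVec, show (pencil x y).submatrix id k.succAbove =
    (X : K[X]) • (y.submatrix id k.succAbove).map C + (x.submatrix id k.succAbove).map C from rfl]
  rcases neg_one_pow_eq_or K[X] k with h | h <;> simpa [h] using hdet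

variable [Fintype ι] {x y : Matrix ι κ K}

theorem eval_vecMul_pencil (g : ι → K[X]) (β : K) (k : κ) :
    ((g ᵥ* pencil x y) k).eval β = ((fun i => (g i).eval β) ᵥ* (x + β • y)) k := by
  simp only [Matrix.vecMul, dotProduct, eval_finsetSum, eval_mul, eval_pencil, Matrix.add_apply,
    Matrix.smul_apply, smul_eq_mul]

theorem coeff_succ_vecMul_pencil (g : ι → K[X]) (j : ℕ) (k : κ) :
    ((g ᵥ* pencil x y) k).coeff (j + 1) =
      ((fun i => (g i).coeff (j + 1)) ᵥ* x) k + ((fun i => (g i).coeff j) ᵥ* y) k := by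
  simp only [Matrix.vecMul, dotProduct, finsetSum_coeff, pencil_apply, mul_add, coeff_add,
    ← mul_assoc, coeff_mul_C, coeff_mul_X, Finset.sum_add_distrib]

theorem eval_eq_zero_of_vecMul_pencil {β : K} (hxy : LinearIndependent K (x + β • y).row)
    {g : ι → K[X]} (hg : ∀ k, ((g ᵥ* pencil x y) k).eval β = 0) (i : ι) : (g i).eval β = 0 := by
  have : (fun i => (g i).eval β) ᵥ* (x + β • y) = 0 ᵥ* (x + β • y) := by
    funext k
    rw [← eval_vecMul_pencil, hg, Matrix.zero_vecMul, Pi.zero_apply]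
  exact congrFun (Matrix.vecMul_injective_iff.mpr hxy this) i

theorem eq_zero_of_vecMul_pencil_eq_C (hy : LinearIndependent K y.row) {g : ι → K[X]}
    {d : κ → K} (hg : g ᵥ* pencil x y = fun k => C (d k)) : g = 0 := by
  suffices ∀ D, (∀ i j, D ≤ j → (g i).coeff j = 0) → g = 0 from
    this (Finset.univ.sup fun i => (g i).natDegree + 1) fun i j hj =>
      coeff_eq_zero_of_natDegree_lt <|
        (Nat.lt_succ_self _).trans_le ((Finset.le_sup (Finset.mem_univ i)).trans hj)
  intro D
  induction D with
  | zero => exact fun h => funext fun i => Polynomial.ext fun j => h i j j.zero_le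
  | succ D ih =>
    intro h
    refine ih fun i j hj => (eq_or_lt_of_le hj).elim (fun hD => ?_) (h i j)
    subst hD
    have htop : (fun i => (g i).coeff D) ᵥ* y = 0 ᵥ* y := by
      funext k
      have := coeff_succ_vecMul_pencil (x := x) (y := y) g D k
      rw [hg, coeff_C_succ, show (fun i => (g i).coeff (D + 1)) = 0 from
        funext fun i => h i _ le_rfl, Matrix.zero_vecMul, Pi.zero_apply, zero_add] at this
      rw [← this, Matrix.zero_vecMul, Pi.zero_apply]
    exact congrFun (Matrix.vecMul_injective_iff.mpr hy htop) i

theorem eq_zero_of_vecMul_pencil_eq_mul_C [IsAlgClosed K]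
    (hxy : ∀ β : K, LinearIndependent K (x + β • y).row) (hy : LinearIndependent K y.row)
    {g : ι → K[X]} {h : K[X]} (hh : h ≠ 0) {d : κ → K}
    (hg : g ᵥ* pencil x y = fun k => h * C (d k)) : d = 0 := by
  induction hdeg : h.natDegree using Nat.strong_induction_on generalizing g h with
  | _ D ih =>
  by_cases hroot : ∃ β, h.IsRoot β
  · -- at a root `β` of `h`, all of `g` vanishes too, so `X - C β` can be cancelled
    obtain ⟨β, hβ⟩ := hroot
    have hgβ : ∀ i, (g i).IsRoot β := eval_eq_zero_of_vecMul_pencil (hxy β) fun k => by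
      rw [hg, eval_mul, hβ.eq_zero, zero_mul]
    obtain ⟨h', rfl⟩ := dvd_iff_isRoot.mpr hβ
    choose g' hg' using fun i => dvd_iff_isRoot.mpr (hgβ i)
    obtain rfl : g = (X - C β) • g' := funext hg'
    have hq : (X - C β : K[X]) ≠ 0 := X_sub_C_ne_zero β
    have hh' : h' ≠ 0 := right_ne_zero_of_mul hh
    refine ih h'.natDegree ?_ hh' (g := g') ?_ rfl
    · rw [← hdeg, natDegree_mul hq hh', natDegree_X_sub_C]
      omega
    · funext k
      refine mul_left_cancel₀ hq ?_
      rw [← smul_eq_mul, ← Pi.smul_apply, ← Matrix.smul_vecMul, hg]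
      exact mul_assoc _ _ _
  · have hdeg0 : h.degree = 0 := by
      by_contra hne
      exact hroot (IsAlgClosed.exists_root h hne)
    obtain ⟨c, rfl⟩ : ∃ c, h = C c := ⟨_, eq_C_of_degree_eq_zero hdeg0⟩
    have hc : c ≠ 0 := fun hc => hh (by rw [hc, map_zero])
    simp_rw [← C_mul] at hg
    have hg0 := eq_zero_of_vecMul_pencil_eq_C hy hg
    rw [hg0, Matrix.zero_vecMul] at hg
    funext k
    have := congrFun hg k
    rw [Pi.zero_apply, eq_comm, C_eq_zero, mul_eq_zero] at this
    exact this.resolve_left hc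

theorem linearIndependent_cofactorVec_pencil [IsAlgClosed K] {n : ℕ}
    {x y : Matrix (Fin n) (Fin (n + 1)) K}
    (hxy : ∀ β : K, LinearIndependent K (x + β • y).row) (hy : LinearIndependent K y.row) :
    LinearIndependent K (cofactorVec (pencil x y)) := by
  refine Fintype.linearIndependent_iff.mpr fun d hd => ?_
  have hdet : (Matrix.of (Fin.cons (fun k => C (d k)) (pencil x y))).det = 0 := by
    rw [det_of_cons_eq_dotProduct_cofactorVec, ← hd]
    simp only [dotProduct, smul_eq_C_mul]
  obtain ⟨v, hv0, hv⟩ := Matrix.exists_vecMul_eq_zero_iff.mpr hdet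
  have hrel : Fin.tail v ᵥ* pencil x y = fun k => -v 0 * C (d k) := by
    funext k
    have := congrFun hv k
    rw [Matrix.vecMul, dotProduct, Fin.sum_univ_succ] at this
    rw [neg_mul, eq_neg_iff_add_eq_zero, add_comm]
    exact this
  by_cases h0 : v 0 = 0
  · refine absurd ?_ hv0
    simp_rw [h0, neg_zero, zero_mul, ← C_0] at hrel
    have htail := eq_zero_of_vecMul_pencil_eq_C hy hrel
    exact funext fun i => Fin.cases h0 (congrFun htail) i
  · exact congrFun (eq_zero_of_vecMul_pencil_eq_mul_C hxy hy (neg_ne_zero.mpr h0) hrel)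

end Pencil

section ProductVectors

variable {𝕜 ι κ : Type*} [RCLike 𝕜]

def IsCompletelyEntangled (V : Submodule 𝕜 (EuclideanSpace 𝕜 (ι × κ))) : Prop :=
  ∀ ψ ∈ V, (∃ (a : ι → 𝕜) (b : κ → 𝕜), ∀ i j, ψ (i, j) = a i * b j) → ψ = 0

def sliceₗ (i : ι) : EuclideanSpace 𝕜 (ι × κ) →ₗ[𝕜] κ → 𝕜 :=
  LinearMap.pi fun k => EuclideanSpace.projₗ (i, k)

@[simp]
theorem sliceₗ_apply (i : ι) (u : EuclideanSpace 𝕜 (ι × κ)) (k : κ) : sliceₗ i u k = u (i, k) :=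
  rfl

def idTensor (A : (κ → 𝕜) ≃ₗ[𝕜] (κ → 𝕜)) :
    EuclideanSpace 𝕜 (ι × κ) ≃ₗ[𝕜] EuclideanSpace 𝕜 (ι × κ) :=
  (WithLp.linearEquiv 2 𝕜 _).trans <| (LinearEquiv.curry 𝕜 𝕜 ι κ).trans <|
    (LinearEquiv.piCongrRight fun _ => A).trans <|
      (LinearEquiv.curry 𝕜 𝕜 ι κ).symm.trans (WithLp.linearEquiv 2 𝕜 _).symm

theorem idTensor_apply (A : (κ → 𝕜) ≃ₗ[𝕜] (κ → 𝕜)) (u : EuclideanSpace 𝕜 (ι × κ)) (i : ι)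
    (k : κ) : idTensor A u (i, k) = A (fun j => u (i, j)) k :=
  rfl

end ProductVectors

section QubitTensor

variable {𝕜 κ : Type*} [RCLike 𝕜] {V : Submodule 𝕜 (EuclideanSpace 𝕜 (Fin 2 × κ))}

theorem IsCompletelyEntangled.disjoint_ker_sliceₗ_add (hV : IsCompletelyEntangled V) (β : 𝕜) :
    Disjoint V (LinearMap.ker (sliceₗ 0 + β • sliceₗ 1)) := by
  refine Submodule.disjoint_def.mpr fun u hu hker => hV u hu ⟨![-β, 1], sliceₗ 1 u, ?_⟩
  intro i k
  have hk := congrFun (LinearMap.mem_ker.mp hker) k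
  simp only [LinearMap.add_apply, LinearMap.smul_apply, Pi.add_apply, Pi.smul_apply,
    sliceₗ_apply, smul_eq_mul, Pi.zero_apply] at hk
  fin_cases i
  · simp only [Fin.zero_eta, Matrix.cons_val_zero, sliceₗ_apply]
    linear_combination hk
  · simp

theorem IsCompletelyEntangled.disjoint_ker_sliceₗ_one (hV : IsCompletelyEntangled V) :
    Disjoint V (LinearMap.ker (sliceₗ 1)) := by
  refine Submodule.disjoint_def.mpr fun u hu hker => hV u hu ⟨![1, 0], sliceₗ 0 u, ?_⟩
  intro i k
  have hk := congrFun (LinearMap.mem_ker.mp hker) k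
  fin_cases i
  · simp
  · simpa using hk

def starSlice {n : ℕ} (ψ : Fin n → EuclideanSpace 𝕜 (Fin 2 × κ)) (r : Fin 2) :
    Matrix (Fin n) κ 𝕜 :=
  Matrix.of fun i k => star (ψ i (r, k))

variable {n : ℕ} {ψ : Fin n → EuclideanSpace 𝕜 (Fin 2 × κ)}

theorem IsCompletelyEntangled.linearIndependent_starSlice_add (hV : IsCompletelyEntangled V)
    (hψ : LinearIndependent 𝕜 ψ) (hψV : ∀ i, ψ i ∈ V) (β : 𝕜) :
    LinearIndependent 𝕜 (starSlice ψ 0 + β • starSlice ψ 1).row := by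
  have hrows : (starSlice ψ 0 + β • starSlice ψ 1).row =
      star ((sliceₗ 0 + star β • sliceₗ 1 : EuclideanSpace 𝕜 (Fin 2 × κ) →ₗ[𝕜] κ → 𝕜) ∘ ψ) := by
    funext i k
    simp [starSlice, Matrix.row]
  rw [hrows]
  exact (hψ.map ((hV.disjoint_ker_sliceₗ_add (star β)).mono_left
    (Submodule.span_le.mpr (Set.range_subset_iff.mpr hψV)))).star

theorem IsCompletelyEntangled.linearIndependent_starSlice_one (hV : IsCompletelyEntangled V)
    (hψ : LinearIndependent 𝕜 ψ) (hψV : ∀ i, ψ i ∈ V) :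
    LinearIndependent 𝕜 (starSlice ψ 1).row :=
  (hψ.map (hV.disjoint_ker_sliceₗ_one.mono_left
    (Submodule.span_le.mpr (Set.range_subset_iff.mpr hψV)))).star

theorem inner_toLp_pair_mul_eq_sum_eval_pencil [Fintype κ]
    (ψ : Fin n → EuclideanSpace 𝕜 (Fin 2 × κ)) (i : Fin n) (α : 𝕜) (b : κ → 𝕜) :
    inner 𝕜 (ψ i) (WithLp.toLp 2 fun p : Fin 2 × κ => ![1, α] p.1 * b p.2) =
      ∑ k, (pencil (starSlice ψ 0) (starSlice ψ 1) i k).eval α * b k := by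
  simp only [PiLp.inner_apply, RCLike.inner_apply', Fintype.sum_prod_type, Fin.sum_univ_two,
    ← Finset.sum_add_distrib, eval_pencil, starSlice, Matrix.of_apply]
  refine Finset.sum_congr rfl fun k _ => ?_
  simp only [Matrix.cons_val_zero, Matrix.cons_val_one, one_mul, RCLike.star_def]
  ring

theorem inner_toLp_pair_mul_eval_cofactorVec
    (ψ : Fin n → EuclideanSpace 𝕜 (Fin 2 × Fin (n + 1))) (i : Fin n) (α : 𝕜) :
    inner 𝕜 (ψ i) (WithLp.toLp 2 fun p : Fin 2 × Fin (n + 1) =>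
      ![1, α] p.1 * (cofactorVec (pencil (starSlice ψ 0) (starSlice ψ 1)) p.2).eval α) = 0 := by
  have h := congrArg (eval α)
    (congrFun (mulVec_cofactorVec (pencil (starSlice ψ 0) (starSlice ψ 1))) i)
  rw [inner_toLp_pair_mul_eq_sum_eval_pencil ψ i α fun k =>
    (cofactorVec (pencil (starSlice ψ 0) (starSlice ψ 1)) k).eval α]
  simpa only [Matrix.mulVec, dotProduct, eval_finsetSum, eval_mul, Pi.zero_apply, eval_zero]
    using h

end QubitTensor

section MomentCurve

variable (𝕜 : Type*) [RCLike 𝕜] (n : ℕ)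

def antidiagonalVec (j : Fin (n + 2)) : EuclideanSpace 𝕜 (Fin 2 × Fin (n + 1)) :=
  WithLp.toLp 2 fun p => if (p.1 : ℕ) + p.2 = j then 1 else 0

variable {𝕜}

theorem sum_smul_antidiagonalVec_apply (c : Fin (n + 2) → 𝕜) {r : Fin 2} {k : Fin (n + 1)}
    {j : Fin (n + 2)} (hj : (r : ℕ) + k = j) :
    (∑ i, c i • antidiagonalVec 𝕜 n i) (r, k) = c j := by
  rw [WithLp.ofLp_sum, Finset.sum_apply, Finset.sum_eq_single j]
  · simp [antidiagonalVec, hj]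
  · intro i _ hi
    simp [antidiagonalVec, hj, Fin.val_inj, hi.symm]
  · simp

variable (𝕜)

theorem linearIndependent_antidiagonalVec : LinearIndependent 𝕜 (antidiagonalVec 𝕜 n) := by
  refine Fintype.linearIndependent_iff.mpr fun c hc j => ?_
  induction j using Fin.lastCases with
  | last =>
    rw [← sum_smul_antidiagonalVec_apply n c (r := 1) (k := Fin.last n) (by simp [add_comm]), hc]
    rfl
  | cast k =>
    rw [← sum_smul_antidiagonalVec_apply n c (r := 0) (k := k) (by simp), hc]
    rfl

variable {𝕜}

theorem toLp_pair_mul_pow_eq_sum (α : 𝕜) :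
    (WithLp.toLp 2 fun p : Fin 2 × Fin (n + 1) => ![1, α] p.1 * α ^ (p.2 : ℕ)) =
      ∑ j : Fin (n + 2), α ^ (j : ℕ) • antidiagonalVec 𝕜 n j := by
  ext ⟨r, k⟩
  rw [sum_smul_antidiagonalVec_apply n _ (j := ⟨r + k, by omega⟩) rfl]
  fin_cases r <;> simp [pow_add]

variable (𝕜)

theorem finrank_span_range_toLp_pair_mul_pow :
    Module.finrank 𝕜 (Submodule.span 𝕜 (Set.range fun α : 𝕜 =>
      (WithLp.toLp 2 fun p : Fin 2 × Fin (n + 1) => ![1, α] p.1 * α ^ (p.2 : ℕ) :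
        EuclideanSpace 𝕜 (Fin 2 × Fin (n + 1))))) = n + 2 := by
  rw [_root_.funext (toLp_pair_mul_pow_eq_sum n), span_range_sum_pow_smul,
    finrank_span_eq_card (linearIndependent_antidiagonalVec 𝕜 n), Fintype.card_fin]

variable {𝕜}

theorem finrank_span_range_toLp_pair_mul_apply_pow
    (A : (Fin (n + 1) → 𝕜) ≃ₗ[𝕜] (Fin (n + 1) → 𝕜)) :
    Module.finrank 𝕜 (Submodule.span 𝕜 (Set.range fun α : 𝕜 =>
      (WithLp.toLp 2 fun p : Fin 2 × Fin (n + 1) => ![1, α] p.1 * A (fun k => α ^ (k : ℕ)) p.2 :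
        EuclideanSpace 𝕜 (Fin 2 × Fin (n + 1))))) = n + 2 := by
  have hcurve : (fun α : 𝕜 => (WithLp.toLp 2 fun p : Fin 2 × Fin (n + 1) =>
      ![1, α] p.1 * A (fun k => α ^ (k : ℕ)) p.2 : EuclideanSpace 𝕜 (Fin 2 × Fin (n + 1)))) =
      idTensor A ∘ fun α : 𝕜 => WithLp.toLp 2 fun p : Fin 2 × Fin (n + 1) =>
        ![1, α] p.1 * α ^ (p.2 : ℕ) := by
    funext α
    ext ⟨r, k⟩
    show ![1, α] r * A (fun j => α ^ (j : ℕ)) k = A (fun j => ![1, α] r * α ^ (j : ℕ)) k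
    rw [← smul_eq_mul, ← Pi.smul_apply, ← map_smul]
    rfl
  rw [hcurve, Set.range_comp, Submodule.span_image_linearEquiv, LinearEquiv.finrank_map_eq,
    finrank_span_range_toLp_pair_mul_pow]

end MomentCurve

theorem CES_orthocomplement_spanned_by_curve (m : ℕ)
    (V : Submodule ℂ (EuclideanSpace ℂ (Fin 2 × Fin m)))
    (hdim : Module.finrank ℂ V = m - 1)
    (hCES : ∀ ψ ∈ V,
      (∃ (a : Fin 2 → ℂ) (b : Fin m → ℂ), ∀ i j, ψ (i, j) = a i * b j) → ψ = 0) :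
    ∃ A : (Fin m → ℂ) ≃ₗ[ℂ] (Fin m → ℂ),
      Vᗮ = Submodule.span ℂ (Set.range fun α : ℂ =>
        (WithLp.toLp 2 (fun p : Fin 2 × Fin m =>
            ![(1 : ℂ), α] p.1 * A (fun k : Fin m => α ^ (k : ℕ)) p.2) :
          EuclideanSpace ℂ (Fin 2 × Fin m))) := by
  obtain _ | n := m
  · exact ⟨LinearEquiv.refl ℂ _, Subsingleton.elim _ _⟩
  have hV : IsCompletelyEntangled V := hCES
  let b := Module.finBasisOfFinrankEq ℂ V hdim
  let ψ : Fin n → EuclideanSpace ℂ (Fin 2 × Fin (n + 1)) := V.subtype ∘ b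
  have hψ : LinearIndependent ℂ ψ := b.linearIndependent.map' V.subtype V.ker_subtype
  have hψV : ∀ i, ψ i ∈ V := fun i => (b i).2
  have hspan : Submodule.span ℂ (Set.range ψ) = V := by
    rw [Set.range_comp, Submodule.span_image, b.span_eq, Submodule.map_subtype_top]
  obtain ⟨A, hA⟩ := exists_linearEquiv_apply_pow_eq_eval
    (linearIndependent_cofactorVec_pencil (hV.linearIndependent_starSlice_add hψ hψV)
      (hV.linearIndependent_starSlice_one hψ hψV))
    fun k => Nat.lt_succ_of_le (natDegree_cofactorVec_pencil_le _ _ k)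
  refine ⟨A, (Submodule.eq_of_le_of_finrank_eq ?_ ?_).symm⟩
  · rw [← hspan]
    refine (Submodule.isOrtho_span.mpr ?_).symm.le
    rintro _ ⟨i, rfl⟩ _ ⟨α, rfl⟩
    simp only [hA]
    exact inner_toLp_pair_mul_eval_cofactorVec ψ i α
  · have hsum := V.finrank_add_finrank_orthogonal
    rw [finrank_euclideanSpace, Fintype.card_prod, Fintype.card_fin, Fintype.card_fin, hdim] at hsum
    rw [finrank_span_range_toLp_pair_mul_apply_pow]
    omega
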